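/- Let θ₁ and θ₂ be congruences on the Płonka sum A of a semilattice direct system of groups, and let θ₁ ∩ θ₂ denote their intersection (which is again a congruence on A). Then: (i) C_{θ₁ ∩ θ₂} = C_{θ₁} ∩ C_{θ₂}; (ii) (θ₁ ∩ θ₂)_{ii} = (θ₁)_{ii} ∩ (θ₂)_{ii} for every i ∈ I. -/

import Mathlib

/-! Płonka sum of a semilattice direct system of groups.

`I` is a join-semilattice, `G i` are groups, and `p i j h : G i →* G j` (for `h : i ≤ j`)
are the transition homomorphisms. The Płonka sum is the sigma type `Σ i, G i` with
multiplication `⟨i,a⟩·⟨j,b⟩ = ⟨i⊔j, p_{i,i⊔j}(a) · p_{j,i⊔j}(b)⟩` and inversion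
`⟨i,a⟩⁻¹ = ⟨i,a⁻¹⟩` (a Clifford semigroup). -/

variable {I : Type*} [SemilatticeSup I] {G : I → Type*} [∀ i, Group (G i)]

/-- Multiplication of the Płonka sum. -/
def pmul (p : ∀ i j : I, i ≤ j → (G i →* G j)) (x y : Σ i, G i) : Σ i, G i :=
  ⟨x.1 ⊔ y.1, p x.1 (x.1 ⊔ y.1) le_sup_left x.2 * p y.1 (x.1 ⊔ y.1) le_sup_right y.2⟩

/-- Inversion of the Płonka sum. -/
def pinv (x : Σ i, G i) : Σ i, G i := ⟨x.1, x.2⁻¹⟩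

/-- `θ` is a congruence on the Płonka sum: an equivalence relation compatible with
multiplication and inversion. -/
def IsCong (p : ∀ i j : I, i ≤ j → (G i →* G j))
    (θ : (Σ i, G i) → (Σ i, G i) → Prop) : Prop :=
  Equivalence θ ∧
    (∀ x x' y y', θ x x' → θ y y' → θ (pmul p x y) (pmul p x' y')) ∧
    (∀ x x', θ x x' → θ (pinv x) (pinv x'))

/-- `S_θ`: the pairs of indices related by `θ`. -/
def Srel (θ : (Σ i, G i) → (Σ i, G i) → Prop) (i j : I) : Prop :=
  ∃ (a : G i) (b : G j), θ ⟨i, a⟩ ⟨j, b⟩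

/-- `C_θ`. -/
def Crel (θ : (Σ i, G i) → (Σ i, G i) → Prop) (i j : I) : Prop :=
  Srel θ i (i ⊔ j) ∧ Srel θ j (i ⊔ j)

/-- A semilattice congruence on `I`: an equivalence relation compatible with `⊔`. -/
def IsSemilatticeCong {I : Type*} [SemilatticeSup I] (C : I → I → Prop) : Prop :=
  Equivalence C ∧ ∀ i₁ j₁ i₂ j₂, C i₁ j₁ → C i₂ j₂ → C (i₁ ⊔ i₂) (j₁ ⊔ j₂)

/-! A congruence relating `⟨i, a⟩` to `⟨j, b⟩` also relates their products with their inverses,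
`⟨i, 1⟩` and `⟨j, 1⟩`. Hence `S_θ` is witnessed by identities, so `S` and `C` commute with
intersections of congruences. -/

lemma sigma_mk_one_congr {ι : Type*} {M : ι → Type*} [∀ i, One (M i)] {i j : ι} (h : i = j) :
    (⟨i, 1⟩ : Σ i, M i) = ⟨j, 1⟩ := by
  subst h; rfl

lemma pmul_pinv_self (p : ∀ i j : I, i ≤ j → (G i →* G j)) (x : Σ i, G i) :
    pmul p x (pinv x) = ⟨x.1, 1⟩ := by
  have h : p x.1 (x.1 ⊔ x.1) le_sup_left x.2 * p x.1 (x.1 ⊔ x.1) le_sup_right x.2⁻¹ = 1 := by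
    rw [← map_mul, mul_inv_cancel, map_one]
  exact (congrArg (Sigma.mk (x.1 ⊔ x.1)) h).trans (sigma_mk_one_congr (sup_idem x.1))

namespace IsCong

variable {p : ∀ i j : I, i ≤ j → (G i →* G j)} {θ : (Σ i, G i) → (Σ i, G i) → Prop}

lemma rel_one_of_rel (hθ : IsCong p θ) {x y : Σ i, G i} (h : θ x y) :
    θ ⟨x.1, 1⟩ ⟨y.1, 1⟩ := by
  simpa only [pmul_pinv_self] using hθ.2.1 _ _ _ _ h (hθ.2.2 _ _ h)

lemma srel_iff (hθ : IsCong p θ) {i j : I} : Srel θ i j ↔ θ ⟨i, 1⟩ ⟨j, 1⟩ :=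
  ⟨fun ⟨_, _, h⟩ => hθ.rel_one_of_rel h, fun h => ⟨1, 1, h⟩⟩

end IsCong

variable {p : ∀ i j : I, i ≤ j → (G i →* G j)} {θ₁ θ₂ : (Σ i, G i) → (Σ i, G i) → Prop}

lemma srel_inf_iff (hθ₁ : IsCong p θ₁) (hθ₂ : IsCong p θ₂) {i j : I} :
    Srel (fun x y => θ₁ x y ∧ θ₂ x y) i j ↔ Srel θ₁ i j ∧ Srel θ₂ i j :=
  ⟨fun ⟨a, b, h₁, h₂⟩ => ⟨⟨a, b, h₁⟩, ⟨a, b, h₂⟩⟩,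
    fun ⟨h₁, h₂⟩ => ⟨1, 1, hθ₁.srel_iff.mp h₁, hθ₂.srel_iff.mp h₂⟩⟩

lemma crel_inf_iff (hθ₁ : IsCong p θ₁) (hθ₂ : IsCong p θ₂) (i j : I) :
    Crel (fun x y => θ₁ x y ∧ θ₂ x y) i j ↔ Crel θ₁ i j ∧ Crel θ₂ i j := by
  simp only [Crel, srel_inf_iff hθ₁ hθ₂, and_and_and_comm]

theorem intersection_of_congruences_general
    (p : ∀ i j : I, i ≤ j → (G i →* G j))
    (θ₁ θ₂ : (Σ i, G i) → (Σ i, G i) → Prop)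
    (hθ₁ : IsCong p θ₁) (hθ₂ : IsCong p θ₂) :
    -- (i)
    (∀ i j : I, Crel (fun x y => θ₁ x y ∧ θ₂ x y) i j ↔ (Crel θ₁ i j ∧ Crel θ₂ i j)) ∧
    -- (ii)
    (∀ (i : I) (a b : G i),
      (θ₁ ⟨i, a⟩ ⟨i, b⟩ ∧ θ₂ ⟨i, a⟩ ⟨i, b⟩) ↔ (θ₁ ⟨i, a⟩ ⟨i, b⟩ ∧ θ₂ ⟨i, a⟩ ⟨i, b⟩)) :=
  ⟨crel_inf_iff hθ₁ hθ₂, fun _ _ _ => Iff.rfl⟩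

/-- For congruences `θ₁, θ₂` on the Płonka sum of a semilattice direct system of groups:
(i) `C_{θ₁ ∩ θ₂} = C_{θ₁} ∩ C_{θ₂}`; (ii) `(θ₁ ∩ θ₂)_{ii} = (θ₁)_{ii} ∩ (θ₂)_{ii}`. -/
theorem intersection_of_congruences
    (p : ∀ i j : I, i ≤ j → (G i →* G j))
    (hid : ∀ (i : I) (h : i ≤ i) (a : G i), p i i h a = a)
    (hcomp : ∀ (i j k : I) (hij : i ≤ j) (hjk : j ≤ k) (a : G i),
      p j k hjk (p i j hij a) = p i k (hij.trans hjk) a)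
    (θ₁ θ₂ : (Σ i, G i) → (Σ i, G i) → Prop)
    (hθ₁ : IsCong p θ₁) (hθ₂ : IsCong p θ₂) :
    -- (i)
    (∀ i j : I, Crel (fun x y => θ₁ x y ∧ θ₂ x y) i j ↔ (Crel θ₁ i j ∧ Crel θ₂ i j)) ∧
    -- (ii)
    (∀ (i : I) (a b : G i),
      (θ₁ ⟨i, a⟩ ⟨i, b⟩ ∧ θ₂ ⟨i, a⟩ ⟨i, b⟩) ↔ (θ₁ ⟨i, a⟩ ⟨i, b⟩ ∧ θ₂ ⟨i, a⟩ ⟨i, b⟩)) :=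
  intersection_of_congruences_general p θ₁ θ₂ hθ₁ hθ₂
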